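/- arXiv:2407.19336 — 2 statements merged into one kernel-verified Lean document; each statement's English description precedes it below -/
import Mathlib

section
/- Let B be a set of parameters and let [a] be the connected component of an element a in an ∅-definable graph G. Then [a] ∈ dcl^∨(B) if and only if there is a formula φ(x) ∈ tp(a/B) and n ∈ ℕ such that the G-diameter of φ(M) is at most n. Moreover, [a] ∈ acl^∨(B) if and only if there is a formula ψ(x) ∈ tp(a/B) over B that intersects only finitely many connected G-components, which are precisely the conjugates of [a] under Aut(M/B). -/
set_option autoImplicit false

open FirstOrder FirstOrder.Language Set Cardinal

namespace Paper

/-- The cardinality `|T|` of the theory: the cardinality of the language plus `ℵ₀`. -/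
noncomputable def theoryCard (L : FirstOrder.Language.{0,0}) : Cardinal :=
  L.card + Cardinal.aleph0

variable (L : FirstOrder.Language.{0,0}) (M : Type) [L.Structure M]

/-- `a` and `b` have the same type over the parameter set `A`. -/
def EqTp (A : Set M) {γ : Type} (a b : γ → M) : Prop :=
  ∀ φ : L.Formula (↥A ⊕ γ),
    φ.Realize (Sum.elim Subtype.val a) ↔ φ.Realize (Sum.elim Subtype.val b)

/-- A formula with parameters from `M` is over the set `B`. -/
def FormulaOver (B : Set M) {γ : Type} (φ : L.Formula (M ⊕ γ)) : Prop :=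
  ∃ ψ : L.Formula (↥B ⊕ γ), ψ.relabel (Sum.map Subtype.val id) = φ

/-- A complete global type (in variables indexed by `γ`): a maximal set of formulas with
parameters in the monster model which is finitely satisfiable in it. -/
def IsGlobalType {γ : Type} (p : Set (L.Formula (M ⊕ γ))) : Prop :=
  (∀ s : Finset (L.Formula (M ⊕ γ)), ↑s ⊆ p →
    ∃ v : γ → M, ∀ φ ∈ s, φ.Realize (Sum.elim id v)) ∧
  (∀ φ : L.Formula (M ⊕ γ), φ ∈ p ∨ BoundedFormula.not φ ∈ p)

/-- `a` realizes the restriction `p ↾ B` of the set of formulas `p` to the parameter set `B`. -/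
def RealizesRes {γ : Type} (p : Set (L.Formula (M ⊕ γ))) (B : Set M) (a : γ → M) : Prop :=
  ∀ φ ∈ p, FormulaOver L M B φ → φ.Realize (Sum.elim id a)

/-- The automorphism `σ` fixes `A` pointwise. -/
def FixesPointwise (A : Set M) (σ : M ≃[L] M) : Prop := ∀ x ∈ A, σ x = x

/-- The global type `p` is `Aut(M/A)`-invariant. -/
def InvariantOver {γ : Type} (p : Set (L.Formula (M ⊕ γ))) (A : Set M) : Prop :=
  ∀ σ : M ≃[L] M, FixesPointwise L M A σ →
    ∀ φ : L.Formula (M ⊕ γ), φ ∈ p ↔ φ.relabel (Sum.map (fun x => σ x) id) ∈ p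

/-- Definable closure. -/
def dcl (A : Set M) : Set M :=
  {x | ∃ φ : L.Formula (↥A ⊕ Unit),
    ∀ y : M, (φ.Realize (Sum.elim Subtype.val fun _ => y) ↔ y = x)}

/-- Algebraic closure. -/
def acl (A : Set M) : Set M :=
  {x | ∃ φ : L.Formula (↥A ⊕ Unit),
    {y : M | φ.Realize (Sum.elim Subtype.val fun _ => y)}.Finite ∧
    φ.Realize (Sum.elim Subtype.val fun _ => x)}

/-- The tuple `e` is in the definable closure of `A`. -/
def InDclT {n : ℕ} (A : Set M) (e : Fin n → M) : Prop :=
  ∃ φ : L.Formula (↥A ⊕ Fin n),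
    ∀ y : Fin n → M, (φ.Realize (Sum.elim Subtype.val y) ↔ y = e)

/-- `M` is a monster model (with respect to the bound `κ`): it is `κ`-saturated and strongly
`κ`-homogeneous. -/
structure IsMonster (κ : Cardinal) : Prop where
  saturated : ∀ A : Set M, #A < κ → ∀ (n : ℕ) (p : Set (L.Formula (↥A ⊕ Fin n))),
    (∀ s : Finset (L.Formula (↥A ⊕ Fin n)), ↑s ⊆ p →
      ∃ v : Fin n → M, ∀ φ ∈ s, φ.Realize (Sum.elim Subtype.val v)) →
    ∃ v : Fin n → M, ∀ φ ∈ p, φ.Realize (Sum.elim Subtype.val v)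
  homogeneous : ∀ (A : Set M) (β : Type) (a b : β → M), #A < κ → #β < κ →
    EqTp L M A a b →
    ∃ σ : M ≃[L] M, FixesPointwise L M A σ ∧ ∀ i, σ (a i) = b i

/-- The instance `φ(x, b)` divides over `A`:  there are `b_i ≡_A b` such that
`{φ(x,b_i) : i < ω}` is `k`-inconsistent. -/
def DividesOver {γ β : Type} (φ : L.Formula (γ ⊕ β)) (b : β → M) (A : Set M) : Prop :=
  ∃ (bs : ℕ → β → M) (k : ℕ), 0 < k ∧ (∀ i, EqTp L M A (bs i) b) ∧
    ∀ s : Finset ℕ, s.card = k →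
      ¬ ∃ x : γ → M, ∀ i ∈ s, φ.Realize (Sum.elim x (bs i))

/-- `tp(a/B)` divides over `A`. -/
def TpDividesOver {γ : Type} (a : γ → M) (B A : Set M) : Prop :=
  ∃ (n : ℕ) (φ : L.Formula (γ ⊕ Fin n)) (b : Fin n → M),
    (∀ i, b i ∈ B) ∧ φ.Realize (Sum.elim a b) ∧ DividesOver L M φ b A

/-- `tp(a/B)` forks over `A`: some formula of it implies a finite disjunction of formulas,
each of which divides over `A`. -/
def TpForksOver {γ : Type} (a : γ → M) (B A : Set M) : Prop :=
  ∃ (n : ℕ) (φ : L.Formula (γ ⊕ Fin n)) (b : Fin n → M),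
    (∀ i, b i ∈ B) ∧ φ.Realize (Sum.elim a b) ∧
    ∃ (m : ℕ) (k : Fin m → ℕ) (ψ : (j : Fin m) → L.Formula (γ ⊕ Fin (k j)))
      (c : (j : Fin m) → Fin (k j) → M),
      (∀ j, DividesOver L M (ψ j) (c j) A) ∧
      ∀ x : γ → M, φ.Realize (Sum.elim x b) → ∃ j, (ψ j).Realize (Sum.elim x (c j))

/-- The set `X` is forking-independent from the set `Y` over `A` (every finite tuple from `X`
has a type over `A ∪ Y` which does not fork over `A`). -/
def SetForkIndep (X Y A : Set M) : Prop :=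
  ∀ (n : ℕ) (x : Fin n → M), (∀ i, x i ∈ X) → ¬ TpForksOver L M x (A ∪ Y) A

/-- A sequence of tuples, indexed by the order `(I, r)`, is indiscernible over `A`. -/
def Indiscernible (A : Set M) {I γ : Type} (r : I → I → Prop) (b : I → γ → M) : Prop :=
  ∀ (n : ℕ) (s t : Fin n → I),
    (∀ i j : Fin n, i < j → r (s i) (s j)) →
    (∀ i j : Fin n, i < j → r (t i) (t j)) →
    EqTp L M A (fun q : Fin n × γ => b (s q.1) q.2) (fun q : Fin n × γ => b (t q.1) q.2)

/-- The set of coordinates of the tuples appearing strictly before index `i`. -/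
def seqBefore (M : Type) {I γ : Type} (r : I → I → Prop) (b : I → γ → M) (i : I) : Set M :=
  ⋃ j ∈ {j : I | r j i}, Set.range (b j)

/-- `(e_i)_{i ∈ I}` is a Morley sequence of `p` over `A` : `e_i ⊨ p ↾ (A e_{<i})`. -/
def MorleySeqOver {γ I : Type} (p : Set (L.Formula (M ⊕ γ))) (A : Set M)
    (r : I → I → Prop) (e : I → γ → M) : Prop :=
  ∀ i : I, RealizesRes L M p (A ∪ seqBefore M r e i) (e i)

/-- A family of tuples is `acl`-independent over `B`. -/
def AclIndepFamily (B : Set M) {I γ : Type} (b : I → γ → M) : Prop :=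
  ∀ J J' : Set I, Disjoint J J' →
    acl L M (B ∪ ⋃ j ∈ J, Set.range (b j)) ∩ acl L M (B ∪ ⋃ j ∈ J', Set.range (b j))
      ⊆ acl L M B

/-- The global type `p` is generically stable over `A`. -/
def GenericallyStable {γ : Type} (p : Set (L.Formula (M ⊕ γ))) (A : Set M) : Prop :=
  InvariantOver L M p A ∧
  ∀ (I : Type) (r : I → I → Prop), IsWellOrder I r → Infinite I →
    ∀ e : I → γ → M, MorleySeqOver L M p A r e →
      ∀ φ : L.Formula (M ⊕ γ),
        {i : I | φ.Realize (Sum.elim id (e i))}.Finite ∨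
        {i : I | ¬ φ.Realize (Sum.elim id (e i))}.Finite

/-- `d = (d_0, …, d_{n-1})` realizes the restriction `p^{⊗n} ↾ B`. -/
def RealizesTensorRes {γ : Type} (p : Set (L.Formula (M ⊕ γ))) (B : Set M)
    {n : ℕ} (d : Fin n → γ → M) : Prop :=
  ∀ i : Fin n, RealizesRes L M p (B ∪ ⋃ j ∈ {j : Fin n | j < i}, Set.range (d j)) (d i)

/-- The tensor power `p^{⊗n}` is generically stable over `A`. -/
def TensorGenStable {γ : Type} (p : Set (L.Formula (M ⊕ γ))) (A : Set M) (n : ℕ) : Prop :=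
  ∀ (I : Type) (r : I → I → Prop), IsWellOrder I r → Infinite I →
    ∀ d : I → Fin n → γ → M,
      (∀ i : I, RealizesTensorRes L M p
        (A ∪ ⋃ j ∈ {j : I | r j i}, ⋃ k : Fin n, Set.range (d j k)) (d i)) →
      ∀ φ : L.Formula (M ⊕ (Fin n × γ)),
        {i : I | φ.Realize (Sum.elim id fun q => d i q.1 q.2)}.Finite ∨
        {i : I | ¬ φ.Realize (Sum.elim id fun q => d i q.1 q.2)}.Finite

/-- `a ⫝^p_A b` : for every `d̄ ⊨ p^{⊗n}↾A` there is `d̄' ≡_{Aa} d̄` with `d̄' ⊨ p^{⊗n}↾Ab`. -/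
def PIndep {γ α β : Type} (p : Set (L.Formula (M ⊕ γ))) (A : Set M)
    (a : α → M) (b : β → M) : Prop :=
  ∀ (n : ℕ) (d : Fin n → γ → M), RealizesTensorRes L M p A d →
    ∃ d' : Fin n → γ → M,
      EqTp L M (A ∪ Set.range a) (fun q : Fin n × γ => d q.1 q.2)
        (fun q : Fin n × γ => d' q.1 q.2) ∧
      RealizesTensorRes L M p (A ∪ Set.range b) d'

/-- A partial type (with parameters in `M`) is ind-definable over `A`. -/
def IndDefinableOver {γ : Type} (π : Set (L.Formula (M ⊕ γ))) (A : Set M) : Prop :=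
  ∀ (n : ℕ) (φ : L.Formula (Fin n ⊕ γ)),
    ∃ (ι : Type) (S : ι → Set (Fin n → M)),
      (∀ i, Set.Definable A L (S i)) ∧
      {b : Fin n → M |
        φ.relabel (Sum.elim (fun i => (Sum.inl (b i) : M ⊕ γ)) Sum.inr) ∈ π} = ⋃ i, S i

/-- A partial type is generically stable over `A`. -/
def GSPartialType {γ : Type} (π : Set (L.Formula (M ⊕ γ))) (A : Set M) : Prop :=
  IndDefinableOver L M π A ∧
  ∀ a : ℕ → γ → M,
    (∀ k : ℕ, RealizesRes L M π (A ∪ ⋃ j ∈ {j : ℕ | j < k}, Set.range (a j)) (a k)) →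
    ∀ φ ∈ π, {k : ℕ | ¬ φ.Realize (Sum.elim id (a k))}.Finite

/-- `a ⫝^{GS}_A b`. -/
def GSIndep {α β : Type} (A : Set M) (a : α → M) (b : β → M) : Prop :=
  ∀ π : Set (L.Formula (M ⊕ β)), GSPartialType L M π A →
    RealizesRes L M π A b → RealizesRes L M π (A ∪ Set.range a) b

/-- An `∅`-definable graph. -/
structure ZeroDefGraph : Type where
  V : Set M
  E : Set (M × M)
  defV : Set.Definable₁ (∅ : Set M) L V
  defE : Set.Definable₂ (∅ : Set M) L E

/-- There is a path of length `n` between `x` and `y` in the graph `G`. -/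
def GPath (G : ZeroDefGraph L M) (n : ℕ) (x y : M) : Prop :=
  ∃ f : ℕ → M, f 0 = x ∧ f n = y ∧ (∀ i ≤ n, f i ∈ G.V) ∧
    ∀ i < n, ((f i, f (i+1)) ∈ G.E ∨ (f (i+1), f i) ∈ G.E)

/-- `dist_G(x,y) ≤ n`. -/
def DistLe (G : ZeroDefGraph L M) (n : ℕ) (x y : M) : Prop := ∃ m ≤ n, GPath L M G m x y

/-- `x` and `y` lie in the same connected component of `G`. -/
def SameComp (G : ZeroDefGraph L M) (x y : M) : Prop := ∃ n : ℕ, GPath L M G n x y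

/-- The connected component `[a]` of `G` is `∨`-definable over `B`. -/
def VDef (G : ZeroDefGraph L M) (B : Set M) (a : M) : Prop :=
  ∀ σ : M ≃[L] M, FixesPointwise L M B σ → SameComp L M G a (σ a)

/-- The connected component `[a]` of `G` is `∨`-algebraic over `B`. -/
def VAlg (G : ZeroDefGraph L M) (B : Set M) (a : M) : Prop :=
  ∃ (n : ℕ) (c : Fin n → M), ∀ σ : M ≃[L] M, FixesPointwise L M B σ →
    ∃ i, SameComp L M G (σ a) (c i)

/-- `a ⫝^{acl∨}_A b` : `acl^∨(Aa) ∩ acl^∨(Ab) = acl^∨(A)`. -/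
def AclVIndep (A : Set M) {α β : Type} (a : α → M) (b : β → M) : Prop :=
  ∀ (G : ZeroDefGraph L M) (x : M), x ∈ G.V →
    ((VAlg L M G (A ∪ Set.range a) x ∧ VAlg L M G (A ∪ Set.range b) x) ↔ VAlg L M G A x)

/-- `a ⫝^{dcl∨}_A b` : `dcl^∨(Aa) ∩ dcl^∨(Ab) ⊆ dcl^∨(A)`. -/
def DclVIndep (A : Set M) {α β : Type} (a : α → M) (b : β → M) : Prop :=
  ∀ (G : ZeroDefGraph L M) (x : M), x ∈ G.V →
    VDef L M G (A ∪ Set.range a) x → VDef L M G (A ∪ Set.range b) x → VDef L M G A x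

/-- `a ⫝^{acl}_A b` : `acl(Aa) ∩ acl(Ab) ⊆ acl(A)`. -/
def AclIndepPair (A : Set M) {α β : Type} (a : α → M) (b : β → M) : Prop :=
  acl L M (A ∪ Set.range a) ∩ acl L M (A ∪ Set.range b) ⊆ acl L M A

/-- A subset `D ⊆ M` is stable: no formula has the order property on `D`. -/
def StableSet1 (D : Set M) : Prop :=
  ∀ (j l : ℕ) (φ : L.Formula (M ⊕ (Fin j ⊕ Fin l))),
    ¬ ∃ (a : ℕ → Fin j → M) (b : ℕ → Fin l → M),
      (∀ i r, a i r ∈ D) ∧ (∀ i r, b i r ∈ D) ∧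
      ∀ i k : ℕ, (φ.Realize (Sum.elim id (Sum.elim (a i) (b k))) ↔ i < k)

/-- The theory is stable. -/
def IsStableTheory : Prop := StableSet1 L M Set.univ

/-- A subset `D ⊆ M^n` is stable: no formula has the order property on `D`. -/
def StableSetT {n : ℕ} (D : Set (Fin n → M)) : Prop :=
  ∀ (j l : ℕ) (φ : L.Formula (M ⊕ ((Fin j × Fin n) ⊕ (Fin l × Fin n)))),
    ¬ ∃ (a : ℕ → Fin j → Fin n → M) (b : ℕ → Fin l → Fin n → M),
      (∀ i r, a i r ∈ D) ∧ (∀ i r, b i r ∈ D) ∧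
      ∀ i k : ℕ,
        (φ.Realize (Sum.elim id
          (Sum.elim (fun q => a i q.1 q.2) (fun q => b k q.1 q.2))) ↔ i < k)

/-- The set of coordinates of the tuples in `D`. -/
def coordsOf (M : Type) {n : ℕ} (D : Set (Fin n → M)) : Set M := {x | ∃ v ∈ D, ∃ i, v i = x}

/-- A `C`-definable subset `D ⊆ M` is stably embedded: every `M`-definable subset of a power of
`D` coincides on `D` with one definable with parameters from `D ∪ C`. -/
def StablyEmbedded1 (C : Set M) (D : Set M) : Prop :=
  ∀ (n : ℕ) (S : Set (Fin n → M)), Set.Definable (Set.univ : Set M) L S →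
    ∃ S' : Set (Fin n → M), Set.Definable (D ∪ C) L S' ∧
      ∀ v : Fin n → M, (∀ i, v i ∈ D) → (v ∈ S ↔ v ∈ S')

/-- A `C`-definable subset `D ⊆ M^m` is stably embedded. -/
def StablyEmbeddedT (C : Set M) {m : ℕ} (D : Set (Fin m → M)) : Prop :=
  ∀ (j : ℕ) (S : Set (Fin j × Fin m → M)), Set.Definable (Set.univ : Set M) L S →
    ∃ S' : Set (Fin j × Fin m → M), Set.Definable (coordsOf M D ∪ C) L S' ∧
      ∀ v : Fin j × Fin m → M, (∀ q : Fin j, (fun i => v (q, i)) ∈ D) → (v ∈ S ↔ v ∈ S')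

/-- `D` is a sort of the stable part `St_B` : a `B`-definable, stable and stably embedded set. -/
def stSort (B : Set M) {m : ℕ} (D : Set (Fin m → M)) : Prop :=
  Set.Definable B L D ∧ StableSetT L M D ∧ StablyEmbeddedT L M B D

/-- `y` is an element of a `B`-definable, stable, stably embedded subset of `M`. -/
def inStPart1 (B : Set M) (y : M) : Prop :=
  ∃ D : Set M, Set.Definable₁ B L D ∧ StableSet1 L M D ∧ StablyEmbedded1 L M B D ∧ y ∈ D

/-- The coordinates of `St_B(C)`: coordinates of tuples lying in a sort of `St_B` and belonging
to `dcl(B ∪ C)`. -/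
def stPartOf (B C : Set M) : Set M :=
  {x | ∃ (m : ℕ) (D : Set (Fin m → M)) (e : Fin m → M) (i : Fin m),
    stSort L M B D ∧ e ∈ D ∧ InDclT L M (B ∪ C) e ∧ e i = x}

/-- `X` is internal to `Lset`. -/
def InternalTo (Lset X : Set M) : Prop :=
  X = ∅ ∨ ∃ (m : ℕ) (R : Set (Fin (m+1) → M)), Set.Definable (Set.univ : Set M) L R ∧
    (∀ w : Fin m → M, (∀ i, w i ∈ Lset) → ∃! y : M, Fin.snoc w y ∈ R) ∧
    (∀ (w : Fin m → M) (y : M), (∀ i, w i ∈ Lset) → Fin.snoc w y ∈ R → y ∈ X) ∧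
    (∀ x ∈ X, ∃ w : Fin m → M, (∀ i, w i ∈ Lset) ∧ Fin.snoc w x ∈ R)

/-- `Int(Lset, A)`: the union of the `A`-definable sets internal to `Lset`. -/
def IntUnion (Lset A : Set M) : Set M :=
  {x | ∃ X : Set M, Set.Definable₁ A L X ∧ InternalTo L M Lset X ∧ x ∈ X}

/-- A pro-`B`-definable map (a family of `B`-definable partial functions). -/
structure ProStMap (B : Set M) (γ : Type) : Type 1 where
  ι : Type
  m : ι → ℕ
  graph : (i : ι) → L.Formula (↥B ⊕ (γ ⊕ Fin (m i)))

/-- The pro-definable map is defined at `a`. -/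
def ProStMapDefinedAt {B : Set M} {γ : Type} (f : ProStMap L M B γ) (a : γ → M) : Prop :=
  ∀ i, ∃! y : Fin (f.m i) → M, (f.graph i).Realize (Sum.elim Subtype.val (Sum.elim a y))

/-- The values of the pro-definable map at `a` lie in sorts of `St_B`. -/
def ProStMapIntoSt {B : Set M} {γ : Type} (f : ProStMap L M B γ) (a : γ → M) : Prop :=
  ∀ (i : f.ι) (y : Fin (f.m i) → M),
    (f.graph i).Realize (Sum.elim Subtype.val (Sum.elim a y)) →
    ∃ D : Set (Fin (f.m i) → M), stSort L M B D ∧ y ∈ D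

/-- The set of coordinates of the value `f(a)`. -/
def ProStMapImage {B : Set M} {γ : Type} (f : ProStMap L M B γ) (a : γ → M) : Set M :=
  {x | ∃ (i : f.ι) (y : Fin (f.m i) → M) (j : Fin (f.m i)),
    (f.graph i).Realize (Sum.elim Subtype.val (Sum.elim a y)) ∧ y j = x}

/-- The type `tp(a/B)` is stably dominated : there is a pro-`B`-definable map `f` into `St_B`
such that for every tuple `d`, if `St_B(d) ⫝_B f(a)` then `tp(d/B f(a)) ⊢ tp(d/B a)`. -/
def StablyDominatedTp {γ : Type} (B : Set M) (a : γ → M) : Prop :=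
  ∃ f : ProStMap L M B γ,
    (∀ a' : γ → M, EqTp L M B a a' →
      ProStMapDefinedAt L M f a' ∧ ProStMapIntoSt L M f a') ∧
    ∀ a' : γ → M, EqTp L M B a a' →
      ∀ (δ : Type) (d : δ → M),
        SetForkIndep L M (stPartOf L M B (Set.range d)) (ProStMapImage L M f a') B →
        ∀ d' : δ → M,
          EqTp L M (B ∪ ProStMapImage L M f a') d d' →
          EqTp L M (B ∪ Set.range a') d d'

/-- The global type `p` is stably dominated over `B` : `p ↾ B` is stably dominated. -/
def StablyDominatedOver {γ : Type} (p : Set (L.Formula (M ⊕ γ))) (B : Set M) : Prop :=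
  ∀ a : γ → M, RealizesRes L M p B a → StablyDominatedTp L M B a

/-- Existential quantification over a `Unit` variable of a formula. -/
def exUnit {α : Type} (φ : L.Formula (α ⊕ Unit)) : L.Formula α :=
  BoundedFormula.ex (BoundedFormula.relabel (Sum.map id fun _ => (0 : Fin 1)) φ)

/-- Conjunction of formulas. -/
def fconj {α : Type} (φ ψ : L.Formula α) : L.Formula α :=
  BoundedFormula.not (BoundedFormula.imp φ (BoundedFormula.not ψ))

/-- The formula `∃ y (F(x,y) ∧ ψ(y))` expressing that the pushforward of the graph `F`
satisfies `ψ`. -/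
def pushFormula {γ P Q : Type} (embP : P → M) (embQ : Q → M)
    (F : L.Formula (P ⊕ (γ ⊕ Unit))) (ψ : L.Formula (Q ⊕ Unit)) : L.Formula (M ⊕ γ) :=
  exUnit L (fconj L
    (F.relabel (Sum.elim (fun x => (Sum.inl (Sum.inl (embP x)) : (M ⊕ γ) ⊕ Unit))
      (Sum.elim (fun g => Sum.inl (Sum.inr g)) Sum.inr)))
    (ψ.relabel (Sum.elim (fun x => (Sum.inl (Sum.inl (embQ x)) : (M ⊕ γ) ⊕ Unit)) Sum.inr)))

/-- `c` is the value at `a` of the definable function with graph `F`. -/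
def FunVal {γ P : Type} (embP : P → M) (F : L.Formula (P ⊕ (γ ⊕ Unit)))
    (a : γ → M) (c : M) : Prop :=
  F.Realize (Sum.elim embP (Sum.elim a fun _ => c))

/-- `c` realizes the restriction to `C` of the pushforward `F_*(p)`. -/
def PushRes {γ P : Type} (p : Set (L.Formula (M ⊕ γ))) (embP : P → M)
    (F : L.Formula (P ⊕ (γ ⊕ Unit))) (C : Set M) (c : M) : Prop :=
  ∀ ψ : L.Formula (↥C ⊕ Unit),
    pushFormula L M embP Subtype.val F ψ ∈ p →
    ψ.Realize (Sum.elim Subtype.val fun _ : Unit => c)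

/-- `p` is dominated over `B` by the definable function with graph `F` : for any `a ⊨ p↾A` and
any tuple `d`, if `f(a) ⊨ f_*(p)↾Bd` then `a ⊨ p↾Bd`. -/
def DominatedBy {γ P : Type} (p : Set (L.Formula (M ⊕ γ))) (A B : Set M)
    (embP : P → M) (F : L.Formula (P ⊕ (γ ⊕ Unit))) : Prop :=
  ∀ a : γ → M, RealizesRes L M p A a →
    ∀ (δ : Type) (d : δ → M) (c : M),
      FunVal L M embP F a c →
      PushRes L M p embP F (B ∪ Set.range d) c →
      RealizesRes L M p (B ∪ Set.range d) a

/-- The theory is NIP. -/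
def IsNIP : Prop :=
  ¬ ∃ (n m : ℕ) (φ : L.Formula (M ⊕ (Fin n ⊕ Fin m)))
      (a : ℕ → Fin n → M) (b : Set ℕ → Fin m → M),
      ∀ (i : ℕ) (S : Set ℕ),
        (φ.Realize (Sum.elim id (Sum.elim (a i) (b S))) ↔ i ∈ S)

/-- The theory eliminates imaginaries: every `M`-definable set has a code. -/
def ElimImaginaries : Prop :=
  ∀ (n : ℕ) (S : Set (Fin n → M)), Set.Definable (Set.univ : Set M) L S →
    ∃ (k : ℕ) (c : Fin k → M), ∀ σ : M ≃[L] M,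
      ((∀ v : Fin n → M, v ∈ S ↔ (fun i => σ (v i)) ∈ S) ↔ ∀ j, σ (c j) = c j)

/-- The theory has the bounded stabilizing property. -/
def TheoryHasBS (κ : Cardinal) : Prop :=
  ∀ (A : Set M), #A < κ → ∀ (n : ℕ) (a : Fin n → M),
    ¬ ∃ (ι : Type) (r : ι → ι → Prop), IsWellOrder ι r ∧
        #ι = Order.succ (theoryCard L) ∧
        ∃ X : ι → Set M, (∀ i j, r i j → X i ⊂ X j) ∧
          ∀ i, dcl L M A ⊆ X i ∧ X i ⊆ dcl L M (A ∪ Set.range a) ∧ dcl L M (X i) = X i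

/-- The theory has the algebraic stabilizing property. -/
def TheoryHasABS (κ : Cardinal) : Prop :=
  ∀ (A : Set M), #A < κ → ∀ (n : ℕ) (a : Fin n → M),
    ¬ ∃ (ι : Type) (r : ι → ι → Prop), IsWellOrder ι r ∧
        #ι = Order.succ (theoryCard L) ∧
        ∃ X : ι → Set M, (∀ i j, r i j → X i ⊂ X j) ∧
          ∀ i, acl L M A ⊆ X i ∧ X i ⊆ acl L M (A ∪ Set.range a) ∧ acl L M (X i) = X i

/-- The `C`-definable set `Lset` has the bounded stabilizing property. -/
def SetHasBS (κ : Cardinal) (C Lset : Set M) : Prop :=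
  ∀ (A : Set M), C ⊆ A → #A < κ → ∀ (n : ℕ) (a : Fin n → M),
    ¬ ∃ (ι : Type) (r : ι → ι → Prop), IsWellOrder ι r ∧
        #ι = Order.succ (theoryCard L) ∧
        ∃ X : ι → Set M, (∀ i j, r i j → X i ⊂ X j) ∧
          ∀ i, (Lset ∩ dcl L M A ⊆ X i) ∧ (X i ⊆ Lset ∩ dcl L M (A ∪ Set.range a)) ∧
            (Lset ∩ dcl L M (A ∪ X i) = X i)

/-- The `C`-definable set `Lset` has the algebraic stabilizing property. -/
def SetHasABS (κ : Cardinal) (C Lset : Set M) : Prop :=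
  ∀ (A : Set M), C ⊆ A → #A < κ → ∀ (n : ℕ) (a : Fin n → M),
    ¬ ∃ (ι : Type) (r : ι → ι → Prop), IsWellOrder ι r ∧
        #ι = Order.succ (theoryCard L) ∧
        ∃ X : ι → Set M, (∀ i j, r i j → X i ⊂ X j) ∧
          ∀ i, (Lset ∩ acl L M A ⊆ X i) ∧ (X i ⊆ Lset ∩ acl L M (A ∪ Set.range a)) ∧
            (Lset ∩ acl L M (A ∪ X i) = X i)

/-- `φ(x,b)` strongly divides over `A`. -/
def StronglyDividesOver {γ β : Type} (φ : L.Formula (γ ⊕ β)) (b : β → M) (A : Set M) : Prop :=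
  (∃ i, b i ∉ acl L M A) ∧
  ∃ k : ℕ, 0 < k ∧
    ∀ bs : Fin k → β → M, (∀ i, EqTp L M A (bs i) b) →
      (∀ i j, i ≠ j → bs i ≠ bs j) →
      ¬ ∃ x : γ → M, ∀ i, φ.Realize (Sum.elim x (bs i))

/-- `φ(x,b)` þ-divides over `A`. -/
def ThornDividesOver {γ β : Type} (φ : L.Formula (γ ⊕ β)) (b : β → M) (A : Set M) : Prop :=
  ∃ (l : ℕ) (c : Fin l → M), StronglyDividesOver L M φ b (A ∪ Set.range c)

/-- `tp(a/B)` þ-forks over `A`. -/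
def TpThornForksOver {γ : Type} (a : γ → M) (B A : Set M) : Prop :=
  ∃ (n : ℕ) (φ : L.Formula (γ ⊕ Fin n)) (b : Fin n → M),
    (∀ i, b i ∈ B) ∧ φ.Realize (Sum.elim a b) ∧
    ∃ (m : ℕ) (k : Fin m → ℕ) (ψ : (j : Fin m) → L.Formula (γ ⊕ Fin (k j)))
      (c : (j : Fin m) → Fin (k j) → M),
      (∀ j, ThornDividesOver L M (ψ j) (c j) A) ∧
      ∀ x : γ → M, φ.Realize (Sum.elim x b) → ∃ j, (ψ j).Realize (Sum.elim x (c j))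

/-- The theory is rosy: þ-forking independence is a strict independence relation,
in particular it satisfies symmetry and local character. -/
def IsRosy : Prop :=
  (∀ (A : Set M) (na nb : ℕ) (a : Fin na → M) (b : Fin nb → M),
    (¬ TpThornForksOver L M a (A ∪ Set.range b) A) ↔
      (¬ TpThornForksOver L M b (A ∪ Set.range a) A)) ∧
  (∀ (n : ℕ) (a : Fin n → M) (B : Set M),
    ∃ A₀ : Set M, A₀ ⊆ B ∧ #A₀ ≤ theoryCard L ∧ ¬ TpThornForksOver L M a B A₀)

/-- The global type `p` is definable over `A`. -/
def DefinableTypeOver {γ : Type} (p : Set (L.Formula (M ⊕ γ))) (A : Set M) : Prop :=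
  ∀ (n : ℕ) (φ : L.Formula (Fin n ⊕ γ)),
    Set.Definable A L
      {b : Fin n → M | φ.relabel (Sum.elim (fun i => (Sum.inl (b i) : M ⊕ γ)) Sum.inr) ∈ p}

/-- The value of the `A`-definable family of functions with graph `G` at parameter `b` and
argument `a`. -/
def FamVal {γ : Type} {mb : ℕ} {A : Set M} (G : L.Formula (↥A ⊕ (Fin mb ⊕ (γ ⊕ Unit))))
    (b : Fin mb → M) (a : γ → M) (y : M) : Prop :=
  G.Realize (Sum.elim Subtype.val (Sum.elim b (Sum.elim a fun _ => y)))

/-- `f_{b₁}` and `f_{b₂}` have the same germ on `p`. -/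
def GermEq {γ : Type} {mb : ℕ} {A : Set M} (p : Set (L.Formula (M ⊕ γ)))
    (G : L.Formula (↥A ⊕ (Fin mb ⊕ (γ ⊕ Unit)))) (b₁ b₂ : Fin mb → M) : Prop :=
  ∀ a : γ → M, RealizesRes L M p (A ∪ Set.range b₁ ∪ Set.range b₂) a →
    ∀ y : M, (FamVal L M G b₁ a y ↔ FamVal L M G b₂ a y)

/-- The subtuple of a sequence of tuples indexed by a finite set of indices. -/
def subTup {K γ : Type} (M : Type) (b : K → γ → M) (J : Finset K) :
    {j // j ∈ J} × γ → M := fun q => b q.1.1 q.2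

/-- The row `𝐝_k` of a `ℤ × ℤ`-indexed sequence. -/
def rowTup {m : ℕ} (M : Type) (c : ℤ × ℤ → Fin m → M) (k : ℤ) : ℤ × Fin m → M :=
  fun q => c (k, q.1) q.2

/-- The tuple of rows `𝐝_I` of a `ℤ × ℤ`-indexed sequence. -/
def rowsTup {m : ℕ} (M : Type) (c : ℤ × ℤ → Fin m → M) (I : Finset ℤ) :
    {i // i ∈ I} × ℤ × Fin m → M :=
  fun q => c (q.1.1, q.2.1) q.2.2

/-!
By homogeneity the orbit of `a` under `Aut(M/B)` is the set of realizations of `tp(a/B)`, and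
the component `[y]` is the increasing union of the `∅`-definable balls `dist_G(y, ·) ≤ N`.
Saturation turns a covering of `tp(a/B)` by an increasing chain of definable sets into the
covering of one formula of `tp(a/B)` by a single member of the chain. If `[a]` is
`∨`-definable, the balls around `a` cover the orbit, so some `φ ∈ tp(a/B)` lies in a ball of
radius `N` and has diameter `≤ 2N`. If `[a]` has finitely many conjugates `[c_i]`, the balls
around the `c_i` cover the orbit, and `ψ ∈ tp(a/B)` meets only these components.
-/

section Graph

variable {L : FirstOrder.Language.{0,0}} {M : Type} [L.Structure M] {G : ZeroDefGraph L M}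

lemma gpath_zero_iff {x y : M} : GPath L M G 0 x y ↔ x = y ∧ x ∈ G.V := by
  constructor
  · rintro ⟨f, rfl, rfl, hV, -⟩
    exact ⟨rfl, hV 0 le_rfl⟩
  · rintro ⟨rfl, hx⟩
    exact ⟨fun _ => x, rfl, rfl, fun _ _ => hx, fun _ h => absurd h (Nat.not_lt_zero _)⟩

lemma gpath_succ_iff {n : ℕ} {x y : M} :
    GPath L M G (n + 1) x y ↔
      ∃ z, GPath L M G n x z ∧ ((z, y) ∈ G.E ∨ (y, z) ∈ G.E) ∧ y ∈ G.V := by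
  constructor
  · rintro ⟨f, hf0, hfn, hV, hE⟩
    refine ⟨f n, ⟨f, hf0, rfl, fun i hi => hV i (by omega), fun i hi => hE i (by omega)⟩,
      hfn ▸ hE n (by omega), hfn ▸ hV (n + 1) le_rfl⟩
  · rintro ⟨z, ⟨f, hf0, hfn, hV, hE⟩, hzy, hy⟩
    have hf : ∀ i ≤ n, Function.update f (n + 1) y i = f i := fun i hi =>
      Function.update_of_ne (by omega) _ _
    refine ⟨Function.update f (n + 1) y, by rw [hf 0 (Nat.zero_le n), hf0],
      Function.update_self .., fun i hi => ?_, fun i hi => ?_⟩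
    · rcases hi.lt_or_eq with hi | rfl
      · rw [hf i (by omega)]; exact hV i (by omega)
      · rwa [Function.update_self]
    · rw [hf i (by omega)]
      rcases Nat.lt_succ_iff_lt_or_eq.mp hi with hi | rfl
      · rw [hf (i + 1) hi]; exact hE i hi
      · rwa [Function.update_self, hfn]

lemma GPath.left_mem {n : ℕ} {x y : M} (h : GPath L M G n x y) : x ∈ G.V := by
  obtain ⟨f, rfl, -, hV, -⟩ := h
  exact hV 0 (Nat.zero_le n)

lemma GPath.trans {n m : ℕ} {x y z : M} (hxy : GPath L M G n x y) (hyz : GPath L M G m y z) :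
    GPath L M G (n + m) x z := by
  induction m generalizing z with
  | zero => obtain ⟨rfl, -⟩ := gpath_zero_iff.mp hyz; exact hxy
  | succ m ih =>
    obtain ⟨w, hyw, hwz, hz⟩ := gpath_succ_iff.mp hyz
    exact gpath_succ_iff.mpr ⟨w, ih hyw, hwz, hz⟩

lemma GPath.symm {n : ℕ} {x y : M} (h : GPath L M G n x y) : GPath L M G n y x := by
  induction n generalizing y with
  | zero => obtain ⟨rfl, hx⟩ := gpath_zero_iff.mp h; exact gpath_zero_iff.mpr ⟨rfl, hx⟩
  | succ n ih =>
    obtain ⟨z, hxz, hzy, hy⟩ := gpath_succ_iff.mp h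
    have hyz : GPath L M G 1 y z :=
      gpath_succ_iff.mpr ⟨y, gpath_zero_iff.mpr ⟨rfl, hy⟩, hzy.symm, (ih hxz).left_mem⟩
    simpa only [add_comm 1 n] using hyz.trans (ih hxz)

lemma DistLe.mono {n m : ℕ} {x y : M} (hnm : n ≤ m) (h : DistLe L M G n x y) :
    DistLe L M G m x y :=
  let ⟨k, hk, hp⟩ := h; ⟨k, hk.trans hnm, hp⟩

lemma DistLe.symm {n : ℕ} {x y : M} (h : DistLe L M G n x y) : DistLe L M G n y x :=
  let ⟨k, hk, hp⟩ := h; ⟨k, hk, hp.symm⟩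

lemma DistLe.trans {n m : ℕ} {x y z : M} (hxy : DistLe L M G n x y)
    (hyz : DistLe L M G m y z) : DistLe L M G (n + m) x z :=
  let ⟨k, hk, hp⟩ := hxy; let ⟨k', hk', hp'⟩ := hyz; ⟨k + k', by omega, hp.trans hp'⟩

lemma DistLe.sameComp {n : ℕ} {x y : M} (h : DistLe L M G n x y) : SameComp L M G x y :=
  let ⟨k, _, hp⟩ := h; ⟨k, hp⟩

lemma SameComp.exists_distLe {x y : M} (h : SameComp L M G x y) : ∃ n, DistLe L M G n x y :=
  let ⟨n, hp⟩ := h; ⟨n, n, le_rfl, hp⟩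

lemma sameComp_refl {x : M} (hx : x ∈ G.V) : SameComp L M G x x :=
  ⟨0, gpath_zero_iff.mpr ⟨rfl, hx⟩⟩

lemma SameComp.symm {x y : M} (h : SameComp L M G x y) : SameComp L M G y x :=
  let ⟨n, hp⟩ := h; ⟨n, hp.symm⟩

lemma SameComp.trans {x y z : M} (hxy : SameComp L M G x y) (hyz : SameComp L M G y z) :
    SameComp L M G x z :=
  let ⟨n, hp⟩ := hxy; let ⟨m, hp'⟩ := hyz; ⟨n + m, hp.trans hp'⟩

end Graph

section Definability

variable {L : FirstOrder.Language.{0,0}} {M : Type} [L.Structure M]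

lemma gpath_definable (G : ZeroDefGraph L M) (n : ℕ) :
    (∅ : Set M).Definable L {v : Fin 2 → M | GPath L M G n (v 0) (v 1)} := by
  induction n with
  | zero =>
    convert (Set.Definable.diagonal L (∅ : Set M)).inter
      (G.defV.preimage_comp fun _ : Fin 1 => (0 : Fin 2)) using 1
    ext v
    simp [gpath_zero_iff]
  | succ n ih =>
    have hS : (∅ : Set M).Definable L {w : Fin 2 ⊕ Fin 1 → M |
        GPath L M G n (w (.inl 0)) (w (.inr 0)) ∧
          ((w (.inr 0), w (.inl 1)) ∈ G.E ∨ (w (.inl 1), w (.inr 0)) ∈ G.E) ∧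
          w (.inl 1) ∈ G.V} :=
      (ih.preimage_comp (![.inl 0, .inr 0] : Fin 2 → Fin 2 ⊕ Fin 1)).inter
        (((G.defE.preimage_comp (![.inr 0, .inl 1] : Fin 2 → Fin 2 ⊕ Fin 1)).union
          (G.defE.preimage_comp (![.inl 1, .inr 0] : Fin 2 → Fin 2 ⊕ Fin 1))).inter
          (G.defV.preimage_comp fun _ => (.inl 1 : Fin 2 ⊕ Fin 1)))
    convert hS.exists_of_finite using 1
    ext v
    simp only [Set.mem_ofPred_eq, gpath_succ_iff, Sum.elim_inl, Sum.elim_inr]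
    exact ⟨fun ⟨z, hz⟩ => ⟨fun _ => z, hz⟩, fun ⟨u, hu⟩ => ⟨u 0, hu⟩⟩

lemma distLe_definable (G : ZeroDefGraph L M) (n : ℕ) :
    (∅ : Set M).Definable L {v : Fin 2 → M | DistLe L M G n (v 0) (v 1)} := by
  convert Set.definable_iUnion_of_finite fun m : Fin (n + 1) => gpath_definable G m using 1
  ext v
  simp only [DistLe, Set.mem_ofPred_eq, Set.mem_iUnion]
  exact ⟨fun ⟨m, hm, h⟩ => ⟨⟨m, by omega⟩, h⟩, fun ⟨m, h⟩ => ⟨m, by omega, h⟩⟩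

lemma _root_.Set.Definable.definable₁_slice {A : Set M} {R : Set (Fin 2 → M)}
    (hR : A.Definable L R) {c : M} (hc : c ∈ A) : A.Definable₁ L {y | ![y, c] ∈ R} := by
  have hF : A.DefinableMap L fun x : Fin 1 → M => ![x 0, c] := by
    intro i
    fin_cases i
    · exact Set.DefinableFun.proj L
    · exact L.definableFun_const (Fin 1) hc
  exact hR.preimage_map hF

lemma definable₁_setOf_distLe (G : ZeroDefGraph L M) (n : ℕ) {A : Set M} {c : M}
    (hc : c ∈ A) : A.Definable₁ L {y | DistLe L M G n y c} := by
  simpa using ((distLe_definable G n).mono (Set.empty_subset A)).definable₁_slice hc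

lemma realize_comp_of_fixesPointwise {A : Set M} {σ : M ≃[L] M}
    (hσ : FixesPointwise L M A σ) {γ : Type} (φ : L.Formula (↥A ⊕ γ)) (v : γ → M) :
    φ.Realize (Sum.elim Subtype.val (σ ∘ v)) ↔ φ.Realize (Sum.elim Subtype.val v) := by
  have hcomp : Sum.elim Subtype.val (σ ∘ v) = σ ∘ Sum.elim (Subtype.val : A → M) v := by
    ext (x | x)
    · exact (hσ x x.2).symm
    · rfl
  rw [hcomp, StrongHomClass.realize_formula]

lemma _root_.Set.Definable.comp_mem_iff {A : Set M} {α : Type} {s : Set (α → M)}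
    (hs : A.Definable L s) {σ : M ≃[L] M} (hσ : FixesPointwise L M A σ) (v : α → M) :
    σ ∘ v ∈ s ↔ v ∈ s := by
  obtain ⟨φ, rfl⟩ := Set.definable_iff_exists_formula_sum.mp hs
  exact realize_comp_of_fixesPointwise hσ φ v

lemma ZeroDefGraph.apply_mem_V_iff (G : ZeroDefGraph L M) (σ : M ≃[L] M) {x : M} :
    σ x ∈ G.V ↔ x ∈ G.V :=
  G.defV.comp_mem_iff (fun _ h => absurd h (Set.notMem_empty _)) fun _ => x

end Definability

section Monster

variable {L : FirstOrder.Language.{0,0}} {M : Type} [L.Structure M] {κ : Cardinal}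

lemma IsMonster.exists_realize_of_finset (hM : IsMonster L M κ) {A : Set M} (hA : #A < κ)
    {n : ℕ} {ι : Type} (F : ι → L.Formula (↥A ⊕ Fin n))
    (hF : ∀ t : Finset ι, ∃ v : Fin n → M, ∀ i ∈ t, (F i).Realize (Sum.elim Subtype.val v)) :
    ∃ v : Fin n → M, ∀ i, (F i).Realize (Sum.elim Subtype.val v) := by
  classical
  obtain ⟨v, hv⟩ := hM.saturated A hA n (Set.range F) fun s hs => by
    obtain ⟨t, -, rfl⟩ := Finset.subset_set_image_iff.mp (Set.image_univ (f := F) ▸ hs)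
    obtain ⟨v, hv⟩ := hF t
    exact ⟨v, by simpa using hv⟩
  exact ⟨v, fun i => hv _ ⟨i, rfl⟩⟩

lemma IsMonster.exists_fixesPointwise_apply_eq (hM : IsMonster L M κ) (hκ : ℵ₀ ≤ κ)
    {B : Set M} (hB : #B < κ) {a b : M}
    (hab : ∀ ψ : L.Formula (↥B ⊕ Unit), ψ.Realize (Sum.elim Subtype.val fun _ => a) →
      ψ.Realize (Sum.elim Subtype.val fun _ => b)) :
    ∃ σ : M ≃[L] M, FixesPointwise L M B σ ∧ σ a = b := by
  have htp : EqTp L M B (fun _ : Unit => a) (fun _ => b) := fun ψ =>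
    ⟨hab ψ, fun hb => by_contra fun ha => Formula.realize_not.mp (hab ψ.not (by simpa)) hb⟩
  obtain ⟨σ, hσ, hσab⟩ :=
    hM.homogeneous B Unit _ _ hB ((Cardinal.lt_aleph0_of_finite Unit).trans_le hκ) htp
  exact ⟨σ, hσ, hσab ()⟩

lemma IsMonster.exists_realize_tp_forall_mem (hM : IsMonster L M κ) {A B : Set M}
    (hBA : B ⊆ A) (hA : #A < κ) (a : M) {Q : ℕ → Set M} (hQ : Antitone Q)
    (hQdef : ∀ N, A.Definable₁ L (Q N))
    (hsat : ∀ (ψ : L.Formula (↥B ⊕ Unit)) (N : ℕ),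
      ψ.Realize (Sum.elim Subtype.val fun _ => a) →
        ∃ y, ψ.Realize (Sum.elim Subtype.val fun _ => y) ∧ y ∈ Q N) :
    ∃ b, (∀ ψ : L.Formula (↥B ⊕ Unit), ψ.Realize (Sum.elim Subtype.val fun _ => a) →
      ψ.Realize (Sum.elim Subtype.val fun _ => b)) ∧ ∀ N, b ∈ Q N := by
  choose χ hχ using fun N => Set.definable_iff_exists_formula_sum.mp (hQdef N)
  have hχQ : ∀ N (v : Fin 1 → M), (χ N).Realize (Sum.elim Subtype.val v) ↔ v 0 ∈ Q N :=
    fun N v => (Set.ext_iff.mp (hχ N) v).symm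
  let ρ : ↥B ⊕ Unit → ↥A ⊕ Fin 1 := Sum.map (Set.inclusion hBA) fun _ => 0
  have hρ (ψ : L.Formula (↥B ⊕ Unit)) (v : Fin 1 → M) :
      (ψ.relabel ρ).Realize (Sum.elim Subtype.val v) ↔
        ψ.Realize (Sum.elim Subtype.val fun _ => v 0) := by
    rw [Formula.realize_relabel]
    congr!
    ext (x | x) <;> rfl
  let F : {ψ : L.Formula (↥B ⊕ Unit) // ψ.Realize (Sum.elim Subtype.val fun _ => a)} ⊕ ℕ →
      L.Formula (↥A ⊕ Fin 1) := Sum.elim (fun ψ => ψ.1.relabel ρ) χ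
  obtain ⟨v, hv⟩ := hM.exists_realize_of_finset hA F fun t => by
    -- the members of `t` from `tp(a/B)` are conjoined, and their `Q N` reduced to the smallest
    let ψ₀ := Formula.iInf fun i : t => Sum.elim (fun ψ => ψ.1) (fun _ => ⊤) i.1
    obtain ⟨y, hy, hyQ⟩ := hsat ψ₀ (t.sup (Sum.elim 0 id)) <| Formula.realize_iInf.mpr
      fun ⟨i, _⟩ => by rcases i with ψ | N; exacts [ψ.2, by simp]
    refine ⟨fun _ => y, fun i hi => ?_⟩
    rcases i with ψ | N
    · exact (hρ _ _).mpr (Formula.realize_iInf.mp hy ⟨.inl ψ, hi⟩)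
    · exact (hχQ N _).mpr (hQ (Finset.le_sup (f := Sum.elim 0 id) hi) hyQ)
  refine ⟨v 0, fun ψ hψ => (hρ ψ v).mp (hv (.inl ⟨ψ, hψ⟩)), fun N => (hχQ N v).mp (hv (.inr N))⟩

lemma IsMonster.exists_formula_subset_of_orbit_subset_iUnion (hM : IsMonster L M κ) (hκ : ℵ₀ ≤ κ)
    {A B : Set M} (hBA : B ⊆ A) (hA : #A < κ) (a : M) {P : ℕ → Set M} (hP : Monotone P)
    (hPdef : ∀ N, A.Definable₁ L (P N))
    (hcover : ∀ σ : M ≃[L] M, FixesPointwise L M B σ → ∃ N, σ a ∈ P N) :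
    ∃ (ψ : L.Formula (↥B ⊕ Unit)) (N : ℕ), ψ.Realize (Sum.elim Subtype.val fun _ => a) ∧
      ∀ y, ψ.Realize (Sum.elim Subtype.val fun _ => y) → y ∈ P N := by
  by_contra! hsat
  obtain ⟨b, hab, hb⟩ := hM.exists_realize_tp_forall_mem hBA hA a (Q := fun N => (P N)ᶜ)
    (fun _ _ h => Set.compl_subset_compl.mpr (hP h)) (fun N => (hPdef N).compl) hsat
  obtain ⟨σ, hσ, rfl⟩ :=
    hM.exists_fixesPointwise_apply_eq hκ ((Cardinal.mk_le_mk_of_subset hBA).trans_lt hA) hab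
  obtain ⟨N, hN⟩ := hcover σ hσ
  exact hb N hN

end Monster

section Components

variable {L : FirstOrder.Language.{0,0}} {M : Type} [L.Structure M] {κ : Cardinal}

lemma mk_union_lt_of_finite {B F : Set M} (hκ : ℵ₀ ≤ κ) (hB : #B < κ) (hF : F.Finite) :
    #(B ∪ F : Set M) < κ :=
  (Cardinal.mk_union_le B F).trans_lt (Cardinal.add_lt_of_lt hκ hB (hF.lt_aleph0.trans_le hκ))

theorem vDef_iff_exists_formula_forall_distLe (hM : IsMonster L M κ) (hκ : ℵ₀ ≤ κ)
    {B : Set M} (hB : #B < κ) (G : ZeroDefGraph L M) (a : M) :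
    VDef L M G B a ↔ ∃ (φ : L.Formula (↥B ⊕ Unit)) (n : ℕ),
      φ.Realize (Sum.elim Subtype.val fun _ => a) ∧
      ∀ y y' : M, φ.Realize (Sum.elim Subtype.val fun _ => y) →
        φ.Realize (Sum.elim Subtype.val fun _ => y') → DistLe L M G n y y' := by
  constructor
  · intro hdef
    obtain ⟨ψ, N, hψa, hψ⟩ := hM.exists_formula_subset_of_orbit_subset_iUnion hκ
      Set.subset_union_left (mk_union_lt_of_finite hκ hB (Set.finite_singleton a)) a
      (P := fun N => {y | DistLe L M G N y a}) (fun _ _ h _ => DistLe.mono h)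
      (fun N => definable₁_setOf_distLe G N (Or.inr rfl))
      fun σ hσ => (hdef σ hσ).symm.exists_distLe
    exact ⟨ψ, N + N, hψa, fun y y' hy hy' => (hψ y hy).trans (hψ y' hy').symm⟩
  · rintro ⟨φ, n, hφa, hdiam⟩ σ hσ
    exact (hdiam a (σ a) hφa ((realize_comp_of_fixesPointwise hσ φ _).mpr hφa)).sameComp

theorem vAlg_iff_exists_formula_components (hM : IsMonster L M κ) (hκ : ℵ₀ ≤ κ)
    {B : Set M} (hB : #B < κ) (G : ZeroDefGraph L M) {a : M} (ha : a ∈ G.V) :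
    VAlg L M G B a ↔ ∃ ψ : L.Formula (↥B ⊕ Unit),
      ψ.Realize (Sum.elim Subtype.val fun _ => a) ∧
      (∃ (k : ℕ) (c : Fin k → M), ∀ y : M, ψ.Realize (Sum.elim Subtype.val fun _ => y) →
        ∃ i, SameComp L M G y (c i)) ∧
      (∀ y : M, ψ.Realize (Sum.elim Subtype.val fun _ => y) →
        ∃ σ : M ≃[L] M, FixesPointwise L M B σ ∧ SameComp L M G y (σ a)) ∧
      (∀ σ : M ≃[L] M, FixesPointwise L M B σ →
        ∃ y : M, ψ.Realize (Sum.elim Subtype.val fun _ => y) ∧ SameComp L M G y (σ a)) := by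
  constructor
  · rintro ⟨k, c, hc⟩
    -- keeping only the `c i` whose components meet the orbit of `a` puts every realization of
    -- `ψ` below into the component of a conjugate of `a`
    let I : Set (Fin k) :=
      {i | ∃ σ : M ≃[L] M, FixesPointwise L M B σ ∧ SameComp L M G (σ a) (c i)}
    have hPdef (N : ℕ) :
        (B ∪ Set.range c).Definable₁ L (⋃ i : I, {y | DistLe L M G N y (c i)}) := by
      unfold Set.Definable₁
      convert Set.definable_iUnion_of_finite fun i : I =>
        definable₁_setOf_distLe G N (A := B ∪ Set.range c) (Or.inr ⟨i, rfl⟩) using 1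
      ext x
      simp
    obtain ⟨ψ, N, hψa, hψ⟩ := hM.exists_formula_subset_of_orbit_subset_iUnion hκ
      Set.subset_union_left (mk_union_lt_of_finite hκ hB (Set.finite_range c)) a
      (P := fun N => ⋃ i : I, {y | DistLe L M G N y (c i)})
      (fun _ _ h => Set.iUnion_mono fun _ _ => DistLe.mono h) hPdef fun σ hσ => by
        obtain ⟨i, hi⟩ := hc σ hσ
        obtain ⟨N, hN⟩ := hi.exists_distLe
        exact ⟨N, Set.mem_iUnion.mpr ⟨⟨i, σ, hσ, hi⟩, hN⟩⟩
    refine ⟨ψ, hψa, ⟨k, c, fun y hy => ?_⟩, fun y hy => ?_, fun σ hσ => ?_⟩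
    · obtain ⟨i, hi⟩ := Set.mem_iUnion.mp (hψ y hy)
      exact ⟨i, hi.sameComp⟩
    · obtain ⟨⟨i, σ, hσ, hσi⟩, hi⟩ := Set.mem_iUnion.mp (hψ y hy)
      exact ⟨σ, hσ, hi.sameComp.trans hσi.symm⟩
    · exact ⟨σ a, (realize_comp_of_fixesPointwise hσ ψ _).mpr hψa,
        sameComp_refl ((G.apply_mem_V_iff σ).mpr ha)⟩
  · rintro ⟨ψ, hψa, ⟨k, c, hcov⟩, -, -⟩
    exact ⟨k, c, fun σ hσ => hcov (σ a) ((realize_comp_of_fixesPointwise hσ ψ _).mpr hψa)⟩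

end Components

theorem component_characterization
    (L : FirstOrder.Language.{0,0}) (M : Type) [L.Structure M] (κ : Cardinal)
    (hM : IsMonster L M κ) (hT : theoryCard L < κ)
    (B : Set M) (hB : #B < κ)
    (G : ZeroDefGraph L M) (a : M) (ha : a ∈ G.V) :
    (VDef L M G B a ↔ ∃ (φ : L.Formula (↥B ⊕ Unit)) (n : ℕ),
      φ.Realize (Sum.elim Subtype.val fun _ => a) ∧
      ∀ y y' : M, φ.Realize (Sum.elim Subtype.val fun _ => y) →
        φ.Realize (Sum.elim Subtype.val fun _ => y') → DistLe L M G n y y') ∧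
    (VAlg L M G B a ↔ ∃ ψ : L.Formula (↥B ⊕ Unit),
      ψ.Realize (Sum.elim Subtype.val fun _ => a) ∧
      (∃ (k : ℕ) (c : Fin k → M), ∀ y : M, ψ.Realize (Sum.elim Subtype.val fun _ => y) →
        ∃ i, SameComp L M G y (c i)) ∧
      (∀ y : M, ψ.Realize (Sum.elim Subtype.val fun _ => y) →
        ∃ σ : M ≃[L] M, FixesPointwise L M B σ ∧ SameComp L M G y (σ a)) ∧
      (∀ σ : M ≃[L] M, FixesPointwise L M B σ →
        ∃ y : M, ψ.Realize (Sum.elim Subtype.val fun _ => y) ∧ SameComp L M G y (σ a))) := by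
  have hκ : ℵ₀ ≤ κ := (le_add_self : ℵ₀ ≤ L.card + ℵ₀).trans hT.le
  exact ⟨vDef_iff_exists_formula_forall_distLe hM hκ hB G a,
    vAlg_iff_exists_formula_components hM hκ hB G ha⟩

end Paper
end

section
/- Let b be any tuple and p a global A-invariant generically stable type. Then there is a Morley sequence ā of p over A such that for any a ⊨ p↾A: if a ⊨ p↾A ā then a ⊨ p↾Ab. (Such an ā is called a p-basis for b over A.) -/
set_option autoImplicit false

open FirstOrder FirstOrder.Language Set Cardinal

namespace Paper

variable (L : FirstOrder.Language.{0,0}) (M : Type) [L.Structure M]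

/-!
Suppose no Morley sequence is a `p`-basis for `b`: every Morley sequence `I` of `p` over `A` has
a "bad" `a ⊨ p ↾ A I` with `a ⊭ p ↾ A b`. Then one builds, by transfinite recursion of length
`μ⁺` (`μ` bounding the number of formulas over `A b`), a Morley sequence over `A` in which every
bad term is followed by a "good" term realizing `p ↾ A b ∪ (earlier terms)`. By pigeonhole a
single formula `ψ ∈ p` over `A b` fails at infinitely many bad terms, while it holds at every
good term: this contradicts generic stability.
-/

open Function

theorem exists_forall_of_extend {ι X : Type*} [LinearOrder ι] [WellFoundedLT ι]
    (w₀ : ι → X) (Q : ι → (ι → X) → Prop) (hQ : ∀ c, DependsOn (Q c) (Iic c))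
    (hext : ∀ c w, (∀ j < c, Q j w) → ∃ y, Q c (update w c y)) :
    ∃ v, ∀ c, Q c v := by
  classical
  let below (c : ι) (prev : ∀ j < c, X) : ι → X := fun j =>
    if hj : j < c then prev j hj else w₀ j
  let step (c : ι) (prev : ∀ j < c, X) : X :=
    if h : ∃ y, Q c (update (below c prev) c y) then h.choose else w₀ c
  let v : ι → X := wellFounded_lt.fix step
  refine ⟨v, fun c => wellFounded_lt.induction (C := fun c => Q c v) c fun c ih => ?_⟩
  have hv : v c = step c (fun j _ => v j) := wellFounded_lt.fix_eq _ c
  have hbelow : ∀ j < c, Q j (below c fun j _ => v j) := fun j hj =>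
    (hQ j (x := v) fun i hi => by simp [below, lt_of_le_of_lt hi hj]).mp (ih j hj)
  obtain hex := hext c _ hbelow
  have hvc : v c = hex.choose := by rw [hv]; exact dif_pos hex
  refine (hQ c fun j hj => ?_).mp hex.choose_spec
  rcases hj.lt_or_eq with hj | rfl
  · simp [below, hj, hj.ne]
  · simp [hvc]

theorem _root_.DependsOn.inter {ι β : Type*} {f : (ι → β) → Prop} {s t : Set ι}
    (hs : DependsOn f s) (ht : DependsOn f t) : DependsOn f (s ∩ t) := by
  classical
  intro x y hxy
  let z : ι → β := fun i => if i ∈ s then x i else y i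
  refine (hs (y := z) fun i hi => ?_).trans (ht (x := z) fun i hi => ?_)
  · simp [z, hi]
  · by_cases his : i ∈ s
    · simp [z, his, hxy i ⟨his, hi⟩]
    · simp [z, his]

section

variable {L M} {γ : Type}

theorem _root_.FirstOrder.Language.Formula.dependsOn_freeVarFinset {α : Type}
    [DecidableEq (α ⊕ γ)] (φ : L.Formula (α ⊕ γ)) (u : α → M) :
    DependsOn (fun w : γ → M => φ.Realize (Sum.elim u w)) ↑φ.freeVarFinset.toRight := by
  intro w w' hww'
  have key : ∀ v : γ → M, BoundedFormula.Realize φ (Sum.elim u v) default ↔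
      (φ.restrictFreeVar id).Realize (Sum.elim u v ∘ (↑)) default :=
    fun v => (BoundedFormula.realize_restrictFreeVar (f := id) (v := Sum.elim u v ∘ (↑))
      (Sum.elim u v) fun _ => rfl).symm
  change BoundedFormula.Realize φ _ default = BoundedFormula.Realize φ _ default
  have hagree :
      Sum.elim u w ∘ ((↑) : φ.freeVarFinset → α ⊕ γ) = Sum.elim u w' ∘ (↑) := by
    funext ⟨x, hx⟩
    cases x with
    | inl a => rfl
    | inr g => exact hww' g (by simpa using hx)
  rw [eq_iff_iff, key, key, hagree]

theorem _root_.FirstOrder.Language.Formula.realize_relabel_sumMap {α : Type} (f : α → M)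
    (ψ : L.Formula (α ⊕ γ)) (v : γ → M) :
    (ψ.relabel (Sum.map f id)).Realize (Sum.elim id v) ↔ ψ.Realize (Sum.elim f v) := by
  rw [Formula.realize_relabel, Sum.elim_comp_map]
  rfl

noncomputable def exAt [DecidableEq γ] {α : Type} (c : γ) (ψ : L.Formula (α ⊕ γ)) :
    L.Formula (α ⊕ γ) :=
  (ψ.relabel (Sum.elim (Sum.inl ∘ Sum.inl)
    fun g => if g = c then Sum.inr () else Sum.inl (Sum.inr g))).iExs Unit

theorem realize_exAt [DecidableEq γ] {α : Type} (c : γ) (ψ : L.Formula (α ⊕ γ)) (u : α → M)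
    (w : γ → M) :
    (exAt c ψ).Realize (Sum.elim u w) ↔ ∃ y, ψ.Realize (Sum.elim u (update w c y)) := by
  rw [exAt, Formula.realize_iExs]
  refine ⟨fun ⟨y, hy⟩ => ⟨y (), ?_⟩, fun ⟨y, hy⟩ => ⟨fun _ => y, ?_⟩⟩ <;>
  · rw [Formula.realize_relabel] at *
    convert hy using 2
    funext x
    rcases x with a | g
    · rfl
    · by_cases hg : g = c
      · subst hg; simp
      · simp [hg]

theorem mk_formula_lt {α : Type} {κ : Cardinal} (hκ : ℵ₀ < κ) (hα : #α < κ)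
    (hL : L.card < κ) : #(L.Formula α) < κ := by
  refine lt_of_le_of_lt ?_ (max_lt hκ (add_lt_of_lt hκ.le hα hL))
  refine (mk_le_of_injective (sigma_mk_injective (β := L.BoundedFormula α) (i := 0))).trans ?_
  simpa using BoundedFormula.card_le (L := L) (α := α)

variable {p : Set (L.Formula (M ⊕ γ))}

theorem IsGlobalType.exists_realize (hp : IsGlobalType L M p) {φ : L.Formula (M ⊕ γ)}
    (hφ : φ ∈ p) : ∃ w, φ.Realize (Sum.elim id w) := by
  obtain ⟨w, hw⟩ := hp.1 {φ} (by simpa using hφ)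
  exact ⟨w, hw φ (Finset.mem_singleton_self φ)⟩

theorem IsGlobalType.mem_of_forall_realize (hp : IsGlobalType L M p)
    {s : Finset (L.Formula (M ⊕ γ))} (hs : ↑s ⊆ p) {χ : L.Formula (M ⊕ γ)}
    (h : ∀ w, (∀ φ ∈ s, φ.Realize (Sum.elim id w)) → χ.Realize (Sum.elim id w)) :
    χ ∈ p := by
  classical
  refine (hp.2 χ).resolve_right fun hχ => ?_
  obtain ⟨w, hw⟩ := hp.1 (insert χ.not s) (by simpa [insert_subset_iff] using ⟨hχ, hs⟩)
  exact Formula.realize_not.mp (hw _ (Finset.mem_insert_self _ _))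
    (h w fun φ hφ => hw φ (Finset.mem_insert_of_mem hφ))

theorem RealizesRes.mono (hp : IsGlobalType L M p) {B' B : Set M} (h : B' ⊆ B) {a : γ → M}
    (ha : RealizesRes L M p B a) : RealizesRes L M p B' a := by
  rintro _ hφ ⟨ψ', rfl⟩
  let ψ : L.Formula (↥B ⊕ γ) := ψ'.relabel (Sum.map (inclusion h) id)
  have hψ : ∀ w, (ψ.relabel (Sum.map Subtype.val id)).Realize (Sum.elim id w) ↔
      (ψ'.relabel (Sum.map Subtype.val id)).Realize (Sum.elim id w) := fun w => by
    rw [Formula.realize_relabel_sumMap, Formula.realize_relabel_sumMap, Formula.realize_relabel,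
      Sum.elim_comp_map]
    rfl
  have hψp : ψ.relabel (Sum.map Subtype.val id) ∈ p :=
    hp.mem_of_forall_realize (s := {_}) (by simpa using hφ) fun w hw =>
      (hψ w).2 (by simpa using hw)
  exact (hψ a).1 (ha _ hψp ⟨ψ, rfl⟩)

theorem not_realizesRes_iff {B : Set M} {a : γ → M} :
    ¬ RealizesRes L M p B a ↔ ∃ ψ : L.Formula (↥B ⊕ γ),
      ψ.relabel (Sum.map Subtype.val id) ∈ p ∧ ¬ ψ.Realize (Sum.elim Subtype.val a) := by
  simp only [RealizesRes, FormulaOver, not_forall, exists_prop]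
  constructor
  · rintro ⟨_, hφ, ⟨ψ, rfl⟩, h⟩
    exact ⟨ψ, hφ, by rwa [Formula.realize_relabel_sumMap] at h⟩
  · rintro ⟨ψ, hψ, h⟩
    exact ⟨_, hψ, ⟨ψ, rfl⟩, by rwa [Formula.realize_relabel_sumMap]⟩

variable {B : Set M}

def RealizesResOn (p : Set (L.Formula (M ⊕ γ))) (B : Set M) (s : Set γ) (w : γ → M) : Prop :=
  ∀ ψ : L.Formula (↥B ⊕ γ), ψ.relabel (Sum.map Subtype.val id) ∈ p →
    DependsOn (fun v : γ → M => ψ.Realize (Sum.elim Subtype.val v)) s →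
    ψ.Realize (Sum.elim Subtype.val w)

theorem RealizesResOn.realizesRes {w : γ → M} (h : RealizesResOn p B univ w) :
    RealizesRes L M p B w := by
  rintro φ hφ ⟨ψ, rfl⟩
  rw [Formula.realize_relabel_sumMap]
  exact h ψ hφ (dependsOn_univ _)

theorem dependsOn_realizesResOn (p : Set (L.Formula (M ⊕ γ))) (B : Set M) (s : Set γ) :
    DependsOn (RealizesResOn p B s) s := fun _ _ hww' =>
  propext <| forall_congr' fun _ => imp_congr_right fun _ => imp_congr_right fun hψ =>
    iff_of_eq (hψ hww')

theorem realizesResOn_of_forall_Iic [LinearOrder γ] (hp : IsGlobalType L M p) {s : Set γ}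
    {w : γ → M} (h : ∀ j ∈ s, RealizesResOn p B (Iic j) w) : RealizesResOn p B s w := by
  classical
  intro ψ hψp hψs
  set t := ψ.freeVarFinset.toRight.filter (· ∈ s)
  have ht : DependsOn (fun v : γ → M => ψ.Realize (Sum.elim Subtype.val v)) ↑t :=
    ((ψ.dependsOn_freeVarFinset _).inter hψs).mono fun i hi => by simpa [t] using hi
  rcases t.eq_empty_or_nonempty with ht0 | hne
  · rw [ht0, Finset.coe_empty] at ht
    obtain ⟨v, hv⟩ := hp.exists_realize hψp
    rw [Formula.realize_relabel_sumMap] at hv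
    exact (ht.empty v w).mp hv
  · exact h _ (Finset.mem_filter.1 (t.max'_mem hne)).2 ψ hψp
      (ht.mono fun i hi => t.le_max' i hi)

theorem RealizesResOn.exists_update_forall_realize [LinearOrder γ] (hp : IsGlobalType L M p)
    {c : γ} {w : γ → M} (hw : RealizesResOn p B (Iio c) w)
    {s : Finset (L.Formula (↥B ⊕ γ))}
    (hs : ∀ ψ ∈ s, ψ.relabel (Sum.map Subtype.val id) ∈ p ∧
      DependsOn (fun v : γ → M => ψ.Realize (Sum.elim Subtype.val v)) (Iic c)) :
    ∃ y, ∀ ψ ∈ s, ψ.Realize (Sum.elim Subtype.val (update w c y)) := by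
  classical
  -- `∃ x_c, ⋀ s` is a formula of `p` depending only on the coordinates below `c`
  set χ := exAt c (Formula.iInf fun ψ : s => ψ.1)
  have hχ : ∀ v, χ.Realize (Sum.elim Subtype.val v) ↔
      ∃ y, ∀ ψ ∈ s, ψ.Realize (Sum.elim Subtype.val (update v c y)) := by
    intro v
    simp only [χ, realize_exAt, Formula.realize_iInf, Subtype.forall]
  have hχp : χ.relabel (Sum.map Subtype.val id) ∈ p := by
    refine hp.mem_of_forall_realize (s := s.image (·.relabel (Sum.map Subtype.val id)))
      (by simpa [Set.subset_def] using fun ψ hψ => (hs ψ hψ).1) fun v hv => ?_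
    rw [Formula.realize_relabel_sumMap, hχ]
    refine ⟨v c, fun ψ hψ => ?_⟩
    rw [update_eq_self, ← Formula.realize_relabel_sumMap]
    exact hv _ (Finset.mem_image_of_mem _ hψ)
  refine (hχ w).1 (hw χ hχp fun v v' hvv' => propext ?_)
  simp only [hχ]
  refine exists_congr fun y => forall₂_congr fun ψ hψ =>
    iff_of_eq ((hs ψ hψ).2 fun i hi => ?_)
  rcases (mem_Iic.1 hi).lt_or_eq with hlt | rfl
  · simp [hlt.ne, hvv' i hlt]
  · simp

variable {κ : Cardinal}

theorem IsMonster.exists_update_realizesResOn_Iic (hM : IsMonster L M κ) (hκ : ℵ₀ ≤ κ)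
    (hp : IsGlobalType L M p) (hB : #B < κ) (hγ : #γ < κ) [LinearOrder γ] {c : γ}
    {w : γ → M} (hw : RealizesResOn p B (Iio c) w) :
    ∃ y, RealizesResOn p B (Iic c) (update w c y) := by
  classical
  set P := {ψ : L.Formula (↥B ⊕ γ) | ψ.relabel (Sum.map Subtype.val id) ∈ p ∧
    DependsOn (fun v : γ → M => ψ.Realize (Sum.elim Subtype.val v)) (Iic c)}
  set B' := B ∪ range w
  -- `fill ψ` replaces every variable `g ≠ c` of `ψ` by the parameter `w g`
  let fill (ψ : L.Formula (↥B ⊕ γ)) : L.Formula (↥B' ⊕ Fin 1) :=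
    ψ.relabel (Sum.elim (fun a : ↥B => Sum.inl ⟨a, Or.inl a.2⟩)
      fun g => if g = c then Sum.inr 0 else Sum.inl ⟨w g, Or.inr ⟨g, rfl⟩⟩)
  have hfill : ∀ ψ y, (fill ψ).Realize (Sum.elim Subtype.val fun _ => y) ↔
      ψ.Realize (Sum.elim Subtype.val (update w c y)) := by
    intro ψ y
    rw [Formula.realize_relabel]
    congr! 1
    funext x
    rcases x with a | g
    · rfl
    · by_cases hg : g = c
      · subst hg; simp
      · simp [hg]
  have hB' : #B' < κ := (mk_union_le _ _).trans_lt (add_lt_of_lt hκ hB (mk_range_le.trans_lt hγ))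
  obtain ⟨y, hy⟩ := hM.saturated B' hB' 1 (fill '' P) fun s hs => by
    obtain ⟨s', hs', rfl⟩ := Finset.subset_set_image_iff.1 hs
    obtain ⟨y, hy⟩ := hw.exists_update_forall_realize hp hs'
    refine ⟨fun _ => y, fun χ hχ => ?_⟩
    obtain ⟨ψ, hψ, rfl⟩ := Finset.mem_image.1 hχ
    exact (hfill ψ y).2 (hy ψ hψ)
  refine ⟨y 0, fun ψ hψp hψc => (hfill ψ (y 0)).1 ?_⟩
  convert hy (fill ψ) ⟨ψ, ⟨hψp, hψc⟩, rfl⟩ using 2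
  funext i
  rw [Fin.fin_one_eq_zero i]

/-- Saturation only realizes types in finitely many variables, so `p ↾ B` is realized one
coordinate at a time along a well-order of `γ`. -/
theorem IsMonster.exists_realizesRes (hM : IsMonster L M κ) (hκ : ℵ₀ ≤ κ)
    (hp : IsGlobalType L M p) (hB : #B < κ) (hγ : #γ < κ) : ∃ a, RealizesRes L M p B a := by
  obtain ⟨w₀, -⟩ := hp.1 ∅ (by simp)
  let _ : LinearOrder γ := IsWellOrder.linearOrder WellOrderingRel
  have : WellFoundedLT γ := ⟨WellOrderingRel.isWellOrder.wf⟩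
  obtain ⟨v, hv⟩ := exists_forall_of_extend w₀ (fun c => RealizesResOn p B (Iic c))
    (fun c => dependsOn_realizesResOn p B _) fun c _ hw =>
      hM.exists_update_realizesResOn_Iic hκ hp hB hγ (realizesResOn_of_forall_Iic hp hw)
  exact ⟨v, (realizesResOn_of_forall_Iic hp fun j _ => hv j).realizesRes⟩

end

section

variable {M} {γ : Type} {I : Type} [LinearOrder I]

theorem seqBefore_congr {e e' : I → γ → M} {i : I} (h : ∀ j < i, e j = e' j) :
    seqBefore M (· < ·) e i = seqBefore M (· < ·) e' i :=
  iUnion₂_congr fun j hj => by rw [h j hj]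

theorem seqBefore_of_covBy {a a' : I} (h : a ⋖ a') (e : I → γ → M) :
    seqBefore M (· < ·) e a' = seqBefore M (· < ·) e a ∪ range (e a) := by
  change ⋃ j ∈ Iio a', _ = (⋃ j ∈ Iio a, _) ∪ _
  rw [h.Iio_eq, ← Iio_insert, biUnion_insert, union_comm]

theorem iUnion_range_restrict_Iio (e : I → γ → M) (a : I) :
    ⋃ i : Iio a, range (e i) = seqBefore M (· < ·) e a :=
  (biUnion_eq_iUnion (Iio a) fun j _ => range (e j)).symm

end

section

variable {L M} {γ : Type} {p : Set (L.Formula (M ⊕ γ))} {A : Set M}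

theorem morleySeqOver_restrict_Iio {I : Type} [LinearOrder I] {e : I → γ → M} {a : I}
    (h : ∀ i < a, RealizesRes L M p (A ∪ seqBefore M (· < ·) e i) (e i)) :
    MorleySeqOver L M p A (· < ·) fun i : Iio a => e i := by
  intro i
  have : seqBefore M (· < ·) (fun i : Iio a => e i) i = seqBefore M (· < ·) e i := by
    ext x
    simp only [seqBefore, mem_iUnion, exists_prop]
    exact ⟨fun ⟨j, hj, hx⟩ => ⟨j, hj, hx⟩,
      fun ⟨j, hj, hx⟩ => ⟨⟨j, hj.trans i.2⟩, hj, hx⟩⟩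
  rw [this]
  exact h i i.2

variable {O : Type} [LinearOrder O]

theorem fst_le_of_lt_toLex {X : Type} [Preorder X] {j : Lex (O × X)} {c : O} {x : X}
    (h : j < toLex (c, x)) : (ofLex j).1 ≤ c := by
  rcases Prod.Lex.toLex_lt_toLex.1 (show toLex (ofLex j) < toLex (c, x) from h) with h | ⟨h, -⟩
  exacts [h.le, h.le]

theorem fst_lt_of_lt_toLex_false {j : Lex (O × Bool)} {c : O} (h : j < toLex (c, false)) :
    (ofLex j).1 < c := by
  rcases Prod.Lex.toLex_lt_toLex.1 (show toLex (ofLex j) < toLex (c, false) from h) with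
    h | ⟨-, h⟩
  exacts [h, absurd (Bool.lt_iff.1 h).2 Bool.false_ne_true]

theorem mk_seqBefore_toLex_lt {X : Type} [Preorder X] {κ : Cardinal} (hκ : ℵ₀ ≤ κ) {c : O}
    (hc : #(Iic c) < κ) (hX : #X < κ) (hγ : #γ < κ) (e : O → X → γ → M) (x : X) :
    #(seqBefore M (· < ·) (uncurry e ∘ ofLex) (toLex (c, x))) < κ := by
  have hsub : seqBefore M (· < ·) (uncurry e ∘ ofLex) (toLex (c, x)) ⊆
      range fun q : Iic c × X × γ => e q.1 q.2.1 q.2.2 := by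
    simp only [seqBefore, iUnion_subset_iff]
    rintro j hj _ ⟨g, rfl⟩
    exact ⟨(⟨(ofLex j).1, fst_le_of_lt_toLex hj⟩, (ofLex j).2, g), rfl⟩
  refine (mk_le_mk_of_subset hsub).trans_lt (mk_range_le.trans_lt ?_)
  simpa only [mk_prod, lift_id] using mul_lt_of_lt hκ hc (mul_lt_of_lt hκ hX hγ)

/-- Stage `c` of the construction, along the lexicographically ordered sequence
`e c false, e c true, …`: the bad term `e c false` realizes `p ↾ A ∪ (earlier terms)` but not
`p ↾ A b`, and the good term `e c true` realizes `p ↾ A b ∪ (earlier terms)`. -/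
def IsBadGoodPair {β : Type} (p : Set (L.Formula (M ⊕ γ))) (A : Set M) (b : β → M)
    (e : O → Bool → γ → M) (c : O) : Prop :=
  RealizesRes L M p (A ∪ seqBefore M (· < ·) (uncurry e ∘ ofLex) (toLex (c, false)))
      (e c false) ∧
    ¬ RealizesRes L M p (A ∪ range b) (e c false) ∧
    RealizesRes L M p (A ∪ range b ∪ seqBefore M (· < ·) (uncurry e ∘ ofLex) (toLex (c, true)))
      (e c true)

variable {β : Type} {b : β → M} {e : O → Bool → γ → M}

theorem IsBadGoodPair.realizesRes_seqBefore (hp : IsGlobalType L M p) {c : O}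
    (h : IsBadGoodPair p A b e c) (x : Bool) :
    RealizesRes L M p (A ∪ seqBefore M (· < ·) (uncurry e ∘ ofLex) (toLex (c, x))) (e c x) := by
  cases x
  · exact h.1
  · exact h.2.2.mono hp (union_subset_union_left _ subset_union_left)

theorem morleySeqOver_of_forall_isBadGoodPair (hp : IsGlobalType L M p)
    (h : ∀ c, IsBadGoodPair p A b e c) : MorleySeqOver L M p A (· < ·) (uncurry e ∘ ofLex) :=
  fun i => (h (ofLex i).1).realizesRes_seqBefore hp (ofLex i).2

theorem dependsOn_isBadGoodPair (c : O) :
    DependsOn (fun e : O → Bool → γ → M => IsBadGoodPair p A b e c) (Iic c) := by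
  intro e e' h
  have hs : ∀ x, seqBefore M (· < ·) (uncurry e ∘ ofLex) (toLex (c, x)) =
      seqBefore M (· < ·) (uncurry e' ∘ ofLex) (toLex (c, x)) := fun x =>
    seqBefore_congr fun j hj => congrFun (h _ (fst_le_of_lt_toLex hj)) (ofLex j).2
  simp only [IsBadGoodPair, hs, h c le_rfl]

variable {κ : Cardinal}

theorem IsMonster.exists_update_isBadGoodPair (hM : IsMonster L M κ) (hκ : ℵ₀ ≤ κ)
    (hp : IsGlobalType L M p) (hγ : #γ < κ) (hAb : #↥(A ∪ range b) < κ)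
    (hbad : ∀ (I : Type) (r : I → I → Prop) (_ : IsWellOrder I r) (e : I → γ → M),
      MorleySeqOver L M p A r e →
        ∃ a, RealizesRes L M p (A ∪ ⋃ i, range (e i)) a ∧ ¬ RealizesRes L M p (A ∪ range b) a)
    [WellFoundedLT O] {c : O} (hc : #(Iic c) < κ) (he : ∀ j < c, IsBadGoodPair p A b e j) :
    ∃ y, IsBadGoodPair p A b (update e c y) c := by
  set s := seqBefore M (· < ·) (uncurry e ∘ ofLex) (toLex (c, false))
  obtain ⟨a, ha, hna⟩ := hbad _ _ inferInstance _ (morleySeqOver_restrict_Iio fun i hi =>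
    (he _ (fst_lt_of_lt_toLex_false hi)).realizesRes_seqBefore hp (ofLex i).2)
  rw [iUnion_range_restrict_Iio] at ha
  have hs : #s < κ :=
    mk_seqBefore_toLex_lt hκ hc ((lt_aleph0_of_finite Bool).trans_le hκ) hγ e false
  obtain ⟨a', ha'⟩ := hM.exists_realizesRes hκ hp (B := A ∪ range b ∪ (s ∪ range a))
    ((mk_union_le _ _).trans_lt <| add_lt_of_lt hκ hAb <| (mk_union_le _ _).trans_lt <|
      add_lt_of_lt hκ hs (mk_range_le.trans_lt hγ)) hγ
  set y : Bool → γ → M := fun x => bif x then a' else a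
  have hfalse : seqBefore M (· < ·) (uncurry (update e c y) ∘ ofLex)
      (toLex (c, false)) = s :=
    seqBefore_congr fun j hj => by
      change update e c y (ofLex j).1 _ = _
      rw [update_of_ne (fst_lt_of_lt_toLex_false hj).ne]
      rfl
  have htrue : seqBefore M (· < ·) (uncurry (update e c y) ∘ ofLex)
      (toLex (c, true)) = s ∪ range a := by
    have hcov : toLex (c, false) ⋖ toLex (c, true) := Prod.Lex.toLex_covBy_toLex_iff.2 <|
      .inl ⟨rfl, Bool.false_lt_true, fun x h₁ h₂ => by cases x <;> simp_all⟩
    rw [seqBefore_of_covBy hcov, hfalse]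
    simp [y]
  refine ⟨y, ?_, ?_, ?_⟩ <;> simpa [hfalse, htrue, y]

theorem GenericallyStable.not_forall_isBadGoodPair (hgs : GenericallyStable L M p A)
    (hp : IsGlobalType L M p) [WellFoundedLT O] [Infinite O]
    (hO : #(L.Formula (↥(A ∪ range b) ⊕ γ)) < #O) : ¬ ∀ c, IsBadGoodPair p A b e c := by
  intro he
  choose ψ hψp hψ using fun c => not_realizesRes_iff.1 (he c).2.1
  obtain ⟨ψ₀, hψ₀⟩ := exists_infinite_fiber ψ hO
  obtain ⟨⟨c₀, hc₀ : ψ c₀ = ψ₀⟩⟩ := hψ₀.nonempty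
  have hinj : ∀ x : Bool, Injective fun c : O => toLex (c, x) :=
    fun x c d h => (Prod.ext_iff.1 (toLex.injective h)).1
  have : Infinite (Lex (O × Bool)) := .of_injective _ (hinj true)
  rcases hgs.2 _ (· < ·) inferInstance inferInstance _
    (morleySeqOver_of_forall_isBadGoodPair hp he) (ψ₀.relabel (Sum.map Subtype.val id))
    with hfin | hfin
  · refine infinite_of_injective_forall_mem (hinj true) (fun c => ?_) hfin
    exact (he c).2.2.mono hp subset_union_left _ (hc₀ ▸ hψp c₀) ⟨ψ₀, rfl⟩
  · refine infinite_of_injective_forall_mem (f := fun c : ψ ⁻¹' {ψ₀} => toLex (c.1, false))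
      (fun c d h => Subtype.ext (hinj false h)) (fun ⟨c, hc⟩ => ?_) hfin
    change ¬ (ψ₀.relabel (Sum.map Subtype.val id)).Realize (Sum.elim id (e c false))
    rw [Formula.realize_relabel_sumMap, ← show ψ c = ψ₀ from hc]
    exact hψ c

end

theorem mk_Iic_ord_toType_succ_lt {μ κ : Cardinal} (hκ : ℵ₀ ≤ κ) (hμ : μ < κ)
    (c : (Order.succ μ).ord.ToType) : #(Iic c) < κ := by
  have hIio := mk_Iio_lt c (by rw [mk_toType, card_ord, Ordinal.type_toType])
  rw [mk_toType, card_ord, Order.lt_succ_iff] at hIio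
  rw [← Iio_insert]
  exact mk_insert_le.trans_lt (add_lt_of_lt hκ (hIio.trans_lt hμ) (one_lt_aleph0.trans_le hκ))

theorem p_basis_exists
    (L : FirstOrder.Language.{0,0}) (M : Type) [L.Structure M] (κ : Cardinal)
    (hM : IsMonster L M κ) (hT : theoryCard L < κ)
    (A : Set M) (hA : #A < κ)
    {γ β : Type} (hγ : #γ < κ) (hβ : #β < κ)
    (p : Set (L.Formula (M ⊕ γ))) (hglob : IsGlobalType L M p)
    (hgs : GenericallyStable L M p A)
    (b : β → M) :
    ∃ (I : Type) (r : I → I → Prop) (_ : IsWellOrder I r) (e : I → γ → M),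
      MorleySeqOver L M p A r e ∧
      ∀ a : γ → M, RealizesRes L M p (A ∪ ⋃ i, Set.range (e i)) a →
        RealizesRes L M p (A ∪ Set.range b) a := by
  have hκ : ℵ₀ < κ := le_add_self.trans_lt hT
  by_contra! hbad
  have hAb : #↥(A ∪ range b) < κ :=
    (mk_union_le _ _).trans_lt (add_lt_of_lt hκ.le hA (mk_range_le.trans_lt hβ))
  set μ := #(L.Formula (↥(A ∪ range b) ⊕ γ)) + ℵ₀
  have hμ : μ < κ := add_lt_of_lt hκ.le (mk_formula_lt hκ
    (by simpa using add_lt_of_lt hκ.le hAb hγ) (le_self_add.trans_lt hT)) hκ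
  let O := (Order.succ μ).ord.ToType
  have hO : #O = Order.succ μ := by rw [mk_toType, card_ord]
  have : Infinite O := infinite_iff.2 (hO ▸ le_add_self.trans (Order.le_succ μ))
  obtain ⟨v₀, -⟩ := hglob.1 ∅ (by simp)
  obtain ⟨e, he⟩ := exists_forall_of_extend (fun (_ : O) _ => v₀) _ dependsOn_isBadGoodPair
    fun c _ => hM.exists_update_isBadGoodPair hκ.le hglob hγ hAb hbad
      (mk_Iic_ord_toType_succ_lt hκ.le hμ c)
  exact hgs.not_forall_isBadGoodPair hglob (hO ▸ le_self_add.trans_lt (Order.lt_succ μ)) he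

end Paper
end
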